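/- arXiv:0906.2183 — 5 statements merged into one kernel-verified Lean document; each statement's English description precedes it below -/
import Mathlib

section
/- For every positive integer n, φ(1^n 0^n) = 1. Moreover, if n_1, m_1, n_2, m_2 are positive integers with n_1 + n_2 = m_1 + m_2, then φ(1^{n_1}0^{m_1}1^{n_2}0^{m_2}) = 1 + min{n_1, m_1, n_2, m_2}. -/
/-- A pairing of the positions `Fin N`: a collection of blocks, each of size 2,
with every position in exactly one block. -/
def IsPairing {N : ℕ} (π : Finset (Finset (Fin N))) : Prop :=
  (∀ B ∈ π, B.card = 2) ∧ ∀ i : Fin N, ∃! B, B ∈ π ∧ i ∈ B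

/-- A crossing: blocks `{i₁,i₂}` and `{j₁,j₂}` with `i₁ < j₁ < i₂ < j₂`. -/
def HasCrossing {N : ℕ} (π : Finset (Finset (Fin N))) : Prop :=
  ∃ B ∈ π, ∃ C ∈ π, ∃ i₁ i₂ j₁ j₂ : Fin N,
    i₁ ∈ B ∧ i₂ ∈ B ∧ j₁ ∈ C ∧ j₂ ∈ C ∧ i₁ < j₁ ∧ j₁ < i₂ ∧ i₂ < j₂

/-- A non-crossing `w`-pairing: a non-crossing pairing of the positions of the
bitstring `w` (ones are `true`, zeros are `false`) pairing unequal letters. -/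
def IsNCPairingOn (w : List Bool) (π : Finset (Finset (Fin w.length))) : Prop :=
  IsPairing π ∧ ¬ HasCrossing π ∧
    ∀ B ∈ π, ∀ i ∈ B, ∀ j ∈ B, i ≠ j → w.get i ≠ w.get j

/-- `phi w` is the number of non-crossing `w`-pairings. -/
noncomputable def phi (w : List Bool) : ℕ :=
  Set.ncard {π : Finset (Finset (Fin w.length)) | IsNCPairingOn w π}

/-- The word `1^{n 0} 0^{m 0} 1^{n 1} 0^{m 1} ⋯ 1^{n (r-1)} 0^{m (r-1)}`. -/
def runsF {r : ℕ} (n m : Fin r → ℕ) : List Bool :=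
  (List.finRange r).flatMap fun i => List.replicate (n i) true ++ List.replicate (m i) false

/-- The word `1^{k₁} 0^{k₁} ⋯ 1^{k_r} 0^{k_r}` for `l = [k₁, …, k_r]`. -/
def symWord (l : List ℕ) : List Bool :=
  l.flatMap fun k => List.replicate k true ++ List.replicate k false

/-- The symmetrized pairing function `φ*(n₁,…,n_r) = φ(1^{n₁}0^{n₁}⋯1^{n_r}0^{n_r})`. -/
noncomputable def phiStar (l : List ℕ) : ℕ := phi (symWord l)

/-- `Yval w i` is the lattice-path value `Y_i`. -/
def Yval (w : List Bool) (i : ℕ) : ℤ :=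
  ((w.take i).count true : ℤ) - ((w.take i).count false : ℤ)

/-- The height of position `i` of `w`, relative to the minimum `mY` of the `Y_i`. -/
def heightAt (w : List Bool) (mY : ℤ) (i : Fin w.length) : ℤ :=
  if w.get i then Yval w (i.val + 1) - mY else Yval w (i.val + 1) - mY + 1

/-- `d : Fin r → ℕ` is a Catalan degree sequence of order `r`. -/
def IsCatalanSeq (r : ℕ) (d : Fin r → ℕ) : Prop :=
  (∀ i : ℕ, 1 ≤ i → i ≤ r - 1 →
      (i : ℕ) ≤ ∑ j ∈ Finset.univ.filter (fun j : Fin r => (j : ℕ) < i), d j) ∧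
  ∑ j, d j = r - 1

/-- Sum of the first `j` values of `f`. -/
def prefSum {r : ℕ} (f : Fin r → ℕ) (j : ℕ) : ℕ :=
  ∑ i ∈ Finset.univ.filter (fun i : Fin r => (i : ℕ) < j), f i

/-- `m` is a member of `CF(n)`. -/
def InCF {r : ℕ} (n m : Fin r → ℕ) : Prop :=
  (∀ j : ℕ, 1 ≤ j → j ≤ r - 1 → prefSum m j ≤ prefSum n j) ∧
  (∑ i, m i = ∑ i, n i)

/-!
A non-crossing pairing of the positions of `w` is the same thing as a fixed-point-free involution
`f` whose arcs do not cross, and such an involution is determined by its set of openers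
`{i | i < f i}`: compare two of them at an opener, by induction on the length of its arc.

In `1^{n₁} 0^{m₁} 1^{n₂} 0^{m₂}` the letters force the first run to open and the last one to close.
Inside each middle run the openers form a final segment (an opener followed by a closer in the same
run would give crossing arcs), and partnering is a bijection between the `u` openers of the first
run of zeros and the closers of the second run of ones, so the pairing is determined by `u`.
Conversely every `u` with `m₁ - n₁ ≤ u ≤ min m₁ n₂` is realised by an explicit pairing made of
nested reflections, which gives `1 + min {n₁, m₁, n₂, m₂}` pairings when `n₁ + n₂ = m₁ + m₂`;
`φ(1^n 0^n) = 1` is the case `n₂ = m₂ = 0`.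
-/

open Finset

def IsNCInvolution {N : ℕ} (f : Fin N → Fin N) : Prop :=
  Function.Involutive f ∧ (∀ i, f i ≠ i) ∧ ∀ i j, ¬(i < j ∧ j < f i ∧ f i < f j)

namespace IsNCInvolution

variable {N : ℕ} {f g : Fin N → Fin N}

theorem lt_apply_and_apply_lt (hf : IsNCInvolution f) {a j : Fin N} (h₁ : a < j)
    (h₂ : j < f a) : a < f j ∧ f j < f a := by
  obtain ⟨hinv, hne, hcr⟩ := hf
  refine ⟨lt_of_not_ge fun h => ?_, lt_of_not_ge fun h => ?_⟩
  · rcases h.lt_or_eq with h | h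
    · exact hcr (f j) a ⟨h, by rwa [hinv], by rwa [hinv]⟩
    · exact h₂.ne (by rw [← h, hinv])
  · rcases h.lt_or_eq with h | h
    · exact hcr a j ⟨h₁, h₂, h⟩
    · exact h₁.ne' (hinv.injective h.symm)

theorem apply_lt_iff_not_lt_apply (hf : IsNCInvolution f) (i : Fin N) : f i < i ↔ ¬ i < f i :=
  ⟨fun h h' => lt_asymm h h', fun h => lt_of_le_of_ne (not_lt.1 h) (hf.2.1 i)⟩

theorem apply_lt_of_apply_lt_of_lt (hf : IsNCInvolution f) {i j : Fin N} (h₁ : f j < i)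
    (h₂ : i < j) : f i < j := by
  simpa only [hf.1 j] using (hf.lt_apply_and_apply_lt h₁ (by rwa [hf.1 j])).2

theorem apply_le_of_lt_iff (hf : IsNCInvolution f) (hg : IsNCInvolution g)
    (hop : ∀ i, i < f i ↔ i < g i) (i : Fin N) (hi : i < f i) : f i ≤ g i := by
  induction h : (f i : ℕ) - i using Nat.strong_induction_on generalizing i with
  | _ d ih =>
    -- otherwise `g i` is an `f`-closer inside the `f`-arc of `i`, and its own `f`-arc is shorter
    by_contra! hlt
    set k := g i
    have hik : i < k := (hop i).1 hi
    have hfk : f k < k := by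
      rcases lt_trichotomy k (f k) with h' | h' | h'
      · have := (hop k).1 h'
        rw [hg.1 i] at this
        exact absurd (hik.trans this) (lt_irrefl _)
      · exact absurd h'.symm (hf.2.1 k)
      · exact h'
    obtain ⟨hifk, hfkfi⟩ := hf.lt_apply_and_apply_lt hik hlt
    obtain ⟨-, hgfk⟩ := hg.lt_apply_and_apply_lt hifk hfk
    have := ih _ (by rw [← h, hf.1 k]; omega) (f k) (by rwa [hf.1 k]) rfl
    rw [hf.1 k] at this
    exact absurd hgfk (not_lt.2 this)

theorem eq_of_lt_iff (hf : IsNCInvolution f) (hg : IsNCInvolution g)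
    (hop : ∀ i, i < f i ↔ i < g i) : f = g := by
  have hopener : ∀ i, i < f i → f i = g i := fun i hi =>
    le_antisymm (hf.apply_le_of_lt_iff hg hop i hi)
      (hg.apply_le_of_lt_iff hf (fun i => (hop i).symm) i ((hop i).1 hi))
  funext i
  rcases lt_trichotomy i (f i) with h | h | h
  · exact hopener i h
  · exact absurd h.symm (hf.2.1 i)
  · have := hopener (f i) (by rwa [hf.1 i])
    rw [hf.1 i] at this
    calc f i = g (g (f i)) := (hg.1 _).symm
      _ = g i := by rw [← this]

end IsNCInvolution

def IsNCInvolutionOn (w : List Bool) (f : Fin w.length → Fin w.length) : Prop :=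
  IsNCInvolution f ∧ ∀ i, w.get (f i) ≠ w.get i

def pairingOf {N : ℕ} (f : Fin N → Fin N) : Finset (Finset (Fin N)) :=
  univ.image fun i => {i, f i}

section pairingOf

variable {N : ℕ} {f g : Fin N → Fin N}

theorem mem_pairingOf {B : Finset (Fin N)} : B ∈ pairingOf f ↔ ∃ i, {i, f i} = B := by
  simp [pairingOf]

theorem pair_eq_pair_of_mem (hf : Function.Involutive f) {i a : Fin N}
    (ha : i ∈ ({a, f a} : Finset (Fin N))) : ({a, f a} : Finset (Fin N)) = {i, f i} := by
  rcases Finset.mem_insert.1 ha with rfl | ha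
  · rfl
  · rw [Finset.mem_singleton.1 ha, hf a, Finset.pair_comm]

theorem mem_pair_iff_of_mem (hf : Function.Involutive f) {i j a : Fin N}
    (hi : i ∈ ({a, f a} : Finset (Fin N))) : j ∈ ({a, f a} : Finset (Fin N)) ↔ j = i ∨ j = f i := by
  rw [pair_eq_pair_of_mem hf hi, Finset.mem_insert, Finset.mem_singleton]

theorem IsNCInvolution.isPairing_pairingOf (hf : IsNCInvolution f) : IsPairing (pairingOf f) := by
  refine ⟨fun B hB => ?_, fun i => ⟨{i, f i}, ⟨mem_pairingOf.2 ⟨i, rfl⟩, by simp⟩, ?_⟩⟩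
  · obtain ⟨i, rfl⟩ := mem_pairingOf.1 hB
    exact Finset.card_pair (hf.2.1 i).symm
  · rintro B ⟨hB, hiB⟩
    obtain ⟨a, rfl⟩ := mem_pairingOf.1 hB
    exact pair_eq_pair_of_mem hf.1 hiB

theorem IsNCInvolution.not_hasCrossing_pairingOf (hf : IsNCInvolution f) :
    ¬ HasCrossing (pairingOf f) := by
  rintro ⟨B, hB, C, hC, i₁, i₂, j₁, j₂, hi₁, hi₂, hj₁, hj₂, h₁, h₂, h₃⟩
  obtain ⟨a, rfl⟩ := mem_pairingOf.1 hB
  obtain ⟨b, rfl⟩ := mem_pairingOf.1 hC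
  rw [mem_pair_iff_of_mem hf.1 hi₁] at hi₂
  rw [mem_pair_iff_of_mem hf.1 hj₁] at hj₂
  obtain ⟨rfl | rfl, rfl | rfl⟩ := And.intro hi₂ hj₂
  · exact (h₁.trans h₂).false
  · exact (h₁.trans h₂).false
  · exact (h₂.trans h₃).false
  · exact hf.2.2 i₁ j₁ ⟨h₁, h₂, h₃⟩

theorem pairingOf_injective (hf : Function.Involutive f) (hg : ∀ i, g i ≠ i)
    (h : pairingOf f = pairingOf g) : f = g := by
  funext i
  obtain ⟨a, ha⟩ := mem_pairingOf.1 (h ▸ mem_pairingOf.2 ⟨i, rfl⟩ : {i, g i} ∈ pairingOf f)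
  have hgi : g i ∈ ({a, f a} : Finset (Fin N)) := by rw [ha]; simp
  rw [mem_pair_iff_of_mem hf (i := i) (by rw [ha]; simp)] at hgi
  exact (hgi.resolve_left (hg i)).symm

end pairingOf

theorem IsNCInvolutionOn.isNCPairingOn_pairingOf {w : List Bool} {f : Fin w.length → Fin w.length}
    (hf : IsNCInvolutionOn w f) : IsNCPairingOn w (pairingOf f) := by
  refine ⟨hf.1.isPairing_pairingOf, hf.1.not_hasCrossing_pairingOf, fun B hB i hi j hj hij => ?_⟩
  obtain ⟨a, rfl⟩ := mem_pairingOf.1 hB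
  rw [mem_pair_iff_of_mem hf.1.1 hi] at hj
  rcases hj with rfl | rfl
  · exact absurd rfl hij
  · exact (hf.2 i).symm

theorem IsNCPairingOn.exists_pairingOf_eq {w : List Bool} {π : Finset (Finset (Fin w.length))}
    (hπ : IsNCPairingOn w π) : ∃ f, IsNCInvolutionOn w f ∧ pairingOf f = π := by
  obtain ⟨⟨hcard, huniq⟩, hnc, hlet⟩ := hπ
  have hpartner : ∀ i, ∃ j, j ≠ i ∧ {i, j} ∈ π := fun i => by
    obtain ⟨B, ⟨hB, hiB⟩, -⟩ := huniq i
    obtain ⟨a, b, hab, rfl⟩ := Finset.card_eq_two.1 (hcard B hB)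
    rcases Finset.mem_insert.1 hiB with rfl | hib
    · exact ⟨b, hab.symm, hB⟩
    · rw [Finset.mem_singleton.1 hib]
      exact ⟨a, hab, by rwa [Finset.pair_comm]⟩
  choose f hne hmem using hpartner
  have hblock : ∀ B ∈ π, ∀ i ∈ B, B = {i, f i} := fun B hB i hiB =>
    (huniq i).unique ⟨hB, hiB⟩ ⟨hmem i, by simp⟩
  have hinv : Function.Involutive f := fun i => by
    have h : f (f i) ∈ ({i, f i} : Finset _) := by
      rw [hblock _ (hmem i) (f i) (by simp)]; simp
    simpa [hne (f i)] using h
  refine ⟨f, ⟨⟨hinv, hne, fun i j hij => hnc ⟨_, hmem i, _, hmem j, i, f i, j, f j,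
    by simp, by simp, by simp, by simp, hij⟩⟩, fun i => hlet _ (hmem i) _ (by simp) _ (by simp)
    (hne i)⟩, ?_⟩
  ext B
  refine ⟨fun hB => ?_, fun hB => ?_⟩
  · obtain ⟨i, rfl⟩ := mem_pairingOf.1 hB
    exact hmem i
  · obtain ⟨a, b, -, rfl⟩ := Finset.card_eq_two.1 (hcard B hB)
    exact mem_pairingOf.2 ⟨a, (hblock _ hB a (by simp)).symm⟩

theorem phi_eq_ncard_isNCInvolutionOn (w : List Bool) :
    phi w = {f | IsNCInvolutionOn w f}.ncard := by
  have : {π | IsNCPairingOn w π} = pairingOf '' {f | IsNCInvolutionOn w f} := by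
    ext π
    exact ⟨fun hπ => hπ.exists_pairingOf_eq, fun ⟨f, hf, hπ⟩ => hπ ▸ hf.isNCPairingOn_pairingOf⟩
  rw [phi, this, Set.InjOn.ncard_image fun f hf g hg => pairingOf_injective hf.1.1 hg.1.2.1]

section Intervals

variable {L a b : ℕ}

theorem card_filter_le_val_and_val_lt (hb : b ≤ L) :
    #{j : Fin L | a ≤ (j : ℕ) ∧ (j : ℕ) < b} = b - a := by
  rw [← card_map Fin.valEmbedding, ← Nat.card_Ico a b]
  congr 1
  ext k
  simp only [mem_map, mem_filter, mem_univ, true_and, Fin.valEmbedding_apply, mem_Ico]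
  exact ⟨fun ⟨j, hj, hjk⟩ => hjk ▸ hj, fun hk => ⟨⟨k, by omega⟩, hk, rfl⟩⟩

variable {P : Fin L → Prop} [DecidablePred P] {i : Fin L}

theorem iff_sub_card_le_of_upward_closed (hb : b ≤ L)
    (hP : ∀ i j : Fin L, a ≤ (i : ℕ) → i < j → (j : ℕ) < b → P i → P j)
    (hai : a ≤ (i : ℕ)) (hib : (i : ℕ) < b) :
    P i ↔ b - #{j : Fin L | a ≤ (j : ℕ) ∧ (j : ℕ) < b ∧ P j} ≤ i := by
  constructor
  · intro hPi
    have : #{j : Fin L | (i : ℕ) ≤ j ∧ (j : ℕ) < b} ≤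
        #{j : Fin L | a ≤ (j : ℕ) ∧ (j : ℕ) < b ∧ P j} := by
      refine card_le_card (monotone_filter_right _ fun j _ hj => ?_)
      rcases hj.1.lt_or_eq with h | h
      · exact ⟨by omega, hj.2, hP i j hai h hj.2 hPi⟩
      · exact ⟨by omega, hj.2, Fin.ext h ▸ hPi⟩
    rw [card_filter_le_val_and_val_lt hb] at this
    omega
  · intro hle
    by_contra hPi
    have : #{j : Fin L | a ≤ (j : ℕ) ∧ (j : ℕ) < b ∧ P j} ≤
        #{j : Fin L | (i : ℕ) + 1 ≤ j ∧ (j : ℕ) < b} := by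
      refine card_le_card (monotone_filter_right _ fun j _ hj => ?_)
      refine ⟨Nat.succ_le_of_lt (lt_of_not_ge fun hji => hPi ?_), hj.2.1⟩
      rcases hji.lt_or_eq with h | h
      · exact hP j i hj.1 h hib hj.2.2
      · exact Fin.ext h ▸ hj.2.2
    rw [card_filter_le_val_and_val_lt hb] at this
    omega

theorem iff_lt_add_card_of_downward_closed
    (hP : ∀ i j : Fin L, a ≤ (i : ℕ) → i < j → (j : ℕ) < b → P j → P i)
    (hai : a ≤ (i : ℕ)) (hib : (i : ℕ) < b) :
    P i ↔ (i : ℕ) < a + #{j : Fin L | a ≤ (j : ℕ) ∧ (j : ℕ) < b ∧ P j} := by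
  constructor
  · intro hPi
    have : #{j : Fin L | a ≤ (j : ℕ) ∧ (j : ℕ) < i + 1} ≤
        #{j : Fin L | a ≤ (j : ℕ) ∧ (j : ℕ) < b ∧ P j} := by
      refine card_le_card (monotone_filter_right _ fun j _ hj => ?_)
      rcases (Nat.le_of_lt_succ hj.2).lt_or_eq with h | h
      · exact ⟨hj.1, by omega, hP j i hj.1 h hib hPi⟩
      · exact ⟨hj.1, by omega, Fin.ext h ▸ hPi⟩
    rw [card_filter_le_val_and_val_lt (by omega)] at this
    omega
  · intro hlt
    by_contra hPi
    have : #{j : Fin L | a ≤ (j : ℕ) ∧ (j : ℕ) < b ∧ P j} ≤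
        #{j : Fin L | a ≤ (j : ℕ) ∧ (j : ℕ) < i} := by
      refine card_le_card (monotone_filter_right _ fun j _ hj => ?_)
      refine ⟨hj.1, lt_of_not_ge fun hij => hPi ?_⟩
      rcases hij.lt_or_eq with h | h
      · exact hP i j hai h hj.2.1 hj.2.2
      · exact Fin.ext h ▸ hj.2.2
    rw [card_filter_le_val_and_val_lt (by omega)] at this
    omega

end Intervals

/-- `g` as a self-map of `Fin L`; it is the identity wherever `g` leaves the range. -/
def restrictNat (L : ℕ) (g : ℕ → ℕ) (i : Fin L) : Fin L :=
  if h : g i < L then ⟨g i, h⟩ else i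

theorem val_restrictNat {L : ℕ} {g : ℕ → ℕ} {i : Fin L} (h : g i < L) :
    (restrictNat L g i : ℕ) = g i := by
  simp [restrictNat, h]

theorem isNCInvolution_restrictNat {L : ℕ} {g : ℕ → ℕ} (hmaps : ∀ i < L, g i < L)
    (hinv : ∀ i < L, g (g i) = i) (hne : ∀ i < L, g i ≠ i)
    (hnc : ∀ i j, j < L → i < j → j < g i → g j ≤ g i) :
    IsNCInvolution (restrictNat L g) := by
  have hval (i : Fin L) : (restrictNat L g i : ℕ) = g i := val_restrictNat (hmaps i i.2)
  refine ⟨fun i => Fin.ext ?_, fun i h => hne i i.2 (by rw [← hval, h]), ?_⟩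
  · rw [hval, hval, hinv i i.2]
  · rintro i j ⟨hij, hji, hfij⟩
    simp only [Fin.lt_def, hval] at hij hji hfij
    exact absurd (hnc i j j.2 hij hji) (not_le.2 hfij)

def fourRuns (n₁ m₁ n₂ m₂ : ℕ) : List Bool :=
  List.replicate n₁ true ++ List.replicate m₁ false ++ List.replicate n₂ true ++
    List.replicate m₂ false

section fourRuns

variable {n₁ m₁ n₂ m₂ : ℕ}

@[simp]
theorem length_fourRuns : (fourRuns n₁ m₁ n₂ m₂).length = n₁ + m₁ + n₂ + m₂ := by
  simp [fourRuns, add_assoc]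

theorem get_fourRuns (i : Fin (fourRuns n₁ m₁ n₂ m₂).length) :
    (fourRuns n₁ m₁ n₂ m₂).get i =
      decide ((i : ℕ) < n₁ ∨ n₁ + m₁ ≤ (i : ℕ) ∧ (i : ℕ) < n₁ + m₁ + n₂) := by
  have := i.2
  rw [List.get_eq_getElem]
  simp only [fourRuns, List.getElem_append, List.getElem_replicate, List.length_append,
    List.length_replicate]
  split_ifs <;> simp <;> omega

/-- The pairing of `fourRuns n₁ m₁ n₂ m₂` whose openers in the first run of zeros are its last `u`
positions. Its arcs come in four nested families, each symmetric about a run boundary (`n₁`,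
`n₁ + m₁`, `n₁ + m₁ + n₂`) or, for the outer `n₁ + u - m₁` arcs, about the middle of the word. -/
def fourRunsPartner (n₁ m₁ n₂ m₂ u i : ℕ) : ℕ :=
  if i < n₁ + u - m₁ then n₁ + m₁ + n₂ + m₂ - 1 - i
  else if i < n₁ + m₁ - u then 2 * n₁ - 1 - i
  else if i < n₁ + m₁ + u then 2 * (n₁ + m₁) - 1 - i
  else if i < n₁ + m₁ + n₂ + m₂ - (n₁ + u - m₁) then 2 * (n₁ + m₁ + n₂) - 1 - i
  else n₁ + m₁ + n₂ + m₂ - 1 - i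

section Admissible

variable {u : ℕ} (hb : n₁ + n₂ = m₁ + m₂) (hu₁ : m₁ ≤ n₁ + u) (hu₂ : u ≤ m₁) (hu₃ : u ≤ n₂)
include hb hu₁ hu₂ hu₃

theorem fourRunsPartner_lt {i : ℕ} (hi : i < n₁ + m₁ + n₂ + m₂) :
    fourRunsPartner n₁ m₁ n₂ m₂ u i < n₁ + m₁ + n₂ + m₂ := by
  unfold fourRunsPartner; split_ifs <;> omega

theorem val_restrictNat_fourRunsPartner (i : Fin (fourRuns n₁ m₁ n₂ m₂).length) :
    (restrictNat _ (fourRunsPartner n₁ m₁ n₂ m₂ u) i : ℕ) = fourRunsPartner n₁ m₁ n₂ m₂ u i :=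
  val_restrictNat <| (fourRunsPartner_lt hb hu₁ hu₂ hu₃ (i.2.trans_eq length_fourRuns)).trans_eq
    length_fourRuns.symm

theorem isNCInvolutionOn_fourRunsPartner :
    IsNCInvolutionOn (fourRuns n₁ m₁ n₂ m₂)
      (restrictNat _ (fourRunsPartner n₁ m₁ n₂ m₂ u)) := by
  refine ⟨isNCInvolution_restrictNat ?_ ?_ ?_ ?_, fun i => ?_⟩
  · intro i hi
    rw [length_fourRuns] at hi ⊢
    exact fourRunsPartner_lt hb hu₁ hu₂ hu₃ hi
  · intro i hi
    rw [length_fourRuns] at hi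
    unfold fourRunsPartner; split_ifs <;> omega
  · intro i hi
    rw [length_fourRuns] at hi
    unfold fourRunsPartner; split_ifs <;> omega
  · intro i j hj hij hji
    rw [length_fourRuns] at hj
    unfold fourRunsPartner at *; split_ifs at * <;> omega
  · have hi := i.2
    simp only [length_fourRuns] at hi
    rw [get_fourRuns, get_fourRuns, val_restrictNat_fourRunsPartner hb hu₁ hu₂ hu₃]
    simp only [ne_eq, decide_eq_decide]
    unfold fourRunsPartner; split_ifs <;> omega

theorem lt_fourRunsPartner_iff {i : ℕ} (hi : i < n₁ + m₁ + n₂ + m₂) :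
    i < fourRunsPartner n₁ m₁ n₂ m₂ u i ↔
      i < n₁ ∨ n₁ + m₁ - u ≤ i ∧ i < n₁ + m₁ ∨ n₁ + m₁ + u ≤ i ∧ i < n₁ + m₁ + n₂ := by
  unfold fourRunsPartner; split_ifs <;> omega

end Admissible

end fourRuns

def firstZerosOpeners {n₁ m₁ n₂ m₂ : ℕ}
    (f : Fin (fourRuns n₁ m₁ n₂ m₂).length → Fin (fourRuns n₁ m₁ n₂ m₂).length) : ℕ :=
  #{j : Fin (fourRuns n₁ m₁ n₂ m₂).length | n₁ ≤ (j : ℕ) ∧ (j : ℕ) < n₁ + m₁ ∧ j < f j}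

theorem firstZerosOpeners_le {n₁ m₁ n₂ m₂ : ℕ}
    (f : Fin (fourRuns n₁ m₁ n₂ m₂).length → Fin (fourRuns n₁ m₁ n₂ m₂).length) :
    firstZerosOpeners f ≤ m₁ := by
  unfold firstZerosOpeners
  have : #{j : Fin (fourRuns n₁ m₁ n₂ m₂).length | n₁ ≤ (j : ℕ) ∧ (j : ℕ) < n₁ + m₁ ∧ j < f j} ≤
      #{j : Fin (fourRuns n₁ m₁ n₂ m₂).length | n₁ ≤ (j : ℕ) ∧ (j : ℕ) < n₁ + m₁} :=
    card_le_card (monotone_filter_right _ fun _ _ hj => ⟨hj.1, hj.2.1⟩)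
  rw [card_filter_le_val_and_val_lt (by rw [length_fourRuns]; omega)] at this
  omega

namespace IsNCInvolutionOn

variable {n₁ m₁ n₂ m₂ : ℕ}
  {f : Fin (fourRuns n₁ m₁ n₂ m₂).length → Fin (fourRuns n₁ m₁ n₂ m₂).length}
  (hf : IsNCInvolutionOn (fourRuns n₁ m₁ n₂ m₂) f)
include hf

theorem fourRuns_apply_mem_ones_iff (i : Fin (fourRuns n₁ m₁ n₂ m₂).length) :
    ((f i : ℕ) < n₁ ∨ n₁ + m₁ ≤ (f i : ℕ) ∧ (f i : ℕ) < n₁ + m₁ + n₂) ↔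
      ¬((i : ℕ) < n₁ ∨ n₁ + m₁ ≤ (i : ℕ) ∧ (i : ℕ) < n₁ + m₁ + n₂) := by
  have := hf.2 i
  rw [get_fourRuns, get_fourRuns, ne_eq, decide_eq_decide] at this
  tauto

theorem fourRuns_lt_apply_of_lt {i j : Fin (fourRuns n₁ m₁ n₂ m₂).length} (hi : n₁ ≤ (i : ℕ))
    (hij : i < j) (hj : (j : ℕ) < n₁ + m₁) (hopen : i < f i) : j < f j := by
  by_contra hclose
  have hfj := (hf.1.apply_lt_iff_not_lt_apply j).2 hclose
  have hi' := hf.fourRuns_apply_mem_ones_iff i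
  have hj' := hf.fourRuns_apply_mem_ones_iff j
  rw [Fin.lt_def] at hfj hij hopen
  have := hf.1.apply_lt_of_apply_lt_of_lt (Fin.lt_def.2 (by omega : (f j : ℕ) < i)) hij
  rw [Fin.lt_def] at this
  omega

theorem fourRuns_apply_lt_of_lt {i j : Fin (fourRuns n₁ m₁ n₂ m₂).length} (hi : n₁ + m₁ ≤ (i : ℕ))
    (hij : i < j) (hj : (j : ℕ) < n₁ + m₁ + n₂) (hclose : f j < j) : f i < i := by
  rw [hf.1.apply_lt_iff_not_lt_apply]
  intro hopen
  have hi' := hf.fourRuns_apply_mem_ones_iff i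
  have hj' := hf.fourRuns_apply_mem_ones_iff j
  rw [Fin.lt_def] at hclose hij hopen
  have := hf.1.apply_lt_of_apply_lt_of_lt (Fin.lt_def.2 (by omega : (f j : ℕ) < i)) hij
  rw [Fin.lt_def] at this
  omega

theorem firstZerosOpeners_eq_card_closers :
    firstZerosOpeners f =
      #{j : Fin (fourRuns n₁ m₁ n₂ m₂).length |
        n₁ + m₁ ≤ (j : ℕ) ∧ (j : ℕ) < n₁ + m₁ + n₂ ∧ f j < j} := by
  refine card_nbij' f f (fun j hj => ?_) (fun j hj => ?_) (fun j _ => hf.1.1 j)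
    (fun j _ => hf.1.1 j)
  all_goals
    simp only [coe_filter, mem_univ, true_and, Set.mem_ofPred_eq, hf.1.1 j] at hj ⊢
    have := hf.fourRuns_apply_mem_ones_iff j
    rw [Fin.lt_def] at hj ⊢
    omega

theorem lt_apply_iff_of_firstZeros {i : Fin (fourRuns n₁ m₁ n₂ m₂).length} (h₁ : n₁ ≤ (i : ℕ))
    (h₂ : (i : ℕ) < n₁ + m₁) : i < f i ↔ n₁ + m₁ - firstZerosOpeners f ≤ i :=
  iff_sub_card_le_of_upward_closed (by rw [length_fourRuns]; omega)
    (fun _ _ => hf.fourRuns_lt_apply_of_lt) h₁ h₂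

theorem apply_lt_iff_of_secondOnes {i : Fin (fourRuns n₁ m₁ n₂ m₂).length}
    (h₁ : n₁ + m₁ ≤ (i : ℕ)) (h₂ : (i : ℕ) < n₁ + m₁ + n₂) :
    f i < i ↔ (i : ℕ) < n₁ + m₁ + firstZerosOpeners f := by
  rw [hf.firstZerosOpeners_eq_card_closers]
  exact iff_lt_add_card_of_downward_closed (fun _ _ => hf.fourRuns_apply_lt_of_lt) h₁ h₂

theorem firstZerosOpeners_le_right : firstZerosOpeners f ≤ n₂ := by
  rw [hf.firstZerosOpeners_eq_card_closers]
  have : #{j : Fin (fourRuns n₁ m₁ n₂ m₂).length |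
        n₁ + m₁ ≤ (j : ℕ) ∧ (j : ℕ) < n₁ + m₁ + n₂ ∧ f j < j} ≤
      #{j : Fin (fourRuns n₁ m₁ n₂ m₂).length | n₁ + m₁ ≤ (j : ℕ) ∧ (j : ℕ) < n₁ + m₁ + n₂} :=
    card_le_card (monotone_filter_right _ fun _ _ hj => ⟨hj.1, hj.2.1⟩)
  rw [card_filter_le_val_and_val_lt (by rw [length_fourRuns]; omega)] at this
  omega

theorem le_add_firstZerosOpeners : m₁ ≤ n₁ + firstZerosOpeners f := by
  -- the closers among the first zeros are partnered injectively with ones of the first run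
  have : #{j : Fin (fourRuns n₁ m₁ n₂ m₂).length | n₁ ≤ (j : ℕ) ∧
      (j : ℕ) < n₁ + m₁ - firstZerosOpeners f} ≤
        #{j : Fin (fourRuns n₁ m₁ n₂ m₂).length | 0 ≤ (j : ℕ) ∧ (j : ℕ) < n₁} := by
    refine card_le_card_of_injOn f (fun j hj => ?_) hf.1.1.injective.injOn
    simp only [coe_filter, mem_univ, true_and, Set.mem_ofPred_eq] at hj ⊢
    have hclose := (hf.1.apply_lt_iff_not_lt_apply j).2
      (by rw [hf.lt_apply_iff_of_firstZeros hj.1 (by omega)]; omega)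
    have := hf.fourRuns_apply_mem_ones_iff j
    rw [Fin.lt_def] at hclose
    omega
  rw [card_filter_le_val_and_val_lt (by rw [length_fourRuns]; omega),
    card_filter_le_val_and_val_lt (by rw [length_fourRuns]; omega)] at this
  omega

theorem lt_apply_iff (i : Fin (fourRuns n₁ m₁ n₂ m₂).length) :
    i < f i ↔ (i : ℕ) < n₁ ∨ n₁ + m₁ - firstZerosOpeners f ≤ i ∧ (i : ℕ) < n₁ + m₁ ∨
      n₁ + m₁ + firstZerosOpeners f ≤ i ∧ (i : ℕ) < n₁ + m₁ + n₂ := by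
  have hclose := hf.1.apply_lt_iff_not_lt_apply i
  have hletter := hf.fourRuns_apply_mem_ones_iff i
  have hi : (i : ℕ) < n₁ + m₁ + n₂ + m₂ := i.2.trans_eq length_fourRuns
  by_cases h₁ : (i : ℕ) < n₁
  · rw [Fin.lt_def]
    omega
  by_cases h₂ : (i : ℕ) < n₁ + m₁
  · rw [hf.lt_apply_iff_of_firstZeros (by omega) h₂]
    omega
  by_cases h₃ : (i : ℕ) < n₁ + m₁ + n₂
  · rw [← not_iff_not, ← hclose, hf.apply_lt_iff_of_secondOnes (by omega) h₃]
    omega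
  rw [Fin.lt_def]
  omega

theorem eq_restrictNat_fourRunsPartner (hb : n₁ + n₂ = m₁ + m₂) :
    f = restrictNat _ (fourRunsPartner n₁ m₁ n₂ m₂ (firstZerosOpeners f)) := by
  have h₁ := hf.le_add_firstZerosOpeners
  have h₂ := firstZerosOpeners_le f
  have h₃ := hf.firstZerosOpeners_le_right
  refine hf.1.eq_of_lt_iff (isNCInvolutionOn_fourRunsPartner hb h₁ h₂ h₃).1 fun i => ?_
  rw [hf.lt_apply_iff, Fin.lt_def, val_restrictNat_fourRunsPartner hb h₁ h₂ h₃,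
    lt_fourRunsPartner_iff hb h₁ h₂ h₃ (i.2.trans_eq length_fourRuns)]

end IsNCInvolutionOn

section fourRuns

variable {n₁ m₁ n₂ m₂ : ℕ}

theorem restrictNat_fourRunsPartner_injOn (hb : n₁ + n₂ = m₁ + m₂) :
    Set.InjOn (fun u => restrictNat (fourRuns n₁ m₁ n₂ m₂).length (fourRunsPartner n₁ m₁ n₂ m₂ u))
      {u | m₁ ≤ n₁ + u ∧ u ≤ m₁ ∧ u ≤ n₂} := by
  rintro u ⟨hu₁, hu₂, hu₃⟩ v ⟨hv₁, hv₂, hv₃⟩ huv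
  by_contra hne
  -- the first zero that is an opener for one of `u`, `v` but a closer for the other
  have hi : n₁ + m₁ - max u v < n₁ + m₁ + n₂ + m₂ := by omega
  have hval := congrArg Fin.val (congrFun huv ⟨n₁ + m₁ - max u v, by simpa using hi⟩)
  simp only [val_restrictNat_fourRunsPartner hb hu₁ hu₂ hu₃,
    val_restrictNat_fourRunsPartner hb hv₁ hv₂ hv₃] at hval
  have hu := lt_fourRunsPartner_iff hb hu₁ hu₂ hu₃ hi
  have hv := lt_fourRunsPartner_iff hb hv₁ hv₂ hv₃ hi
  rw [hval] at hu
  omega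

theorem phi_fourRuns (hb : n₁ + n₂ = m₁ + m₂) :
    phi (fourRuns n₁ m₁ n₂ m₂) = 1 + min (min n₁ m₁) (min n₂ m₂) := by
  have hset : {f | IsNCInvolutionOn (fourRuns n₁ m₁ n₂ m₂) f} =
      ↑((Icc (m₁ - n₁) (min m₁ n₂)).image
        fun u => restrictNat (fourRuns n₁ m₁ n₂ m₂).length (fourRunsPartner n₁ m₁ n₂ m₂ u)) := by
    ext f
    simp only [Set.mem_ofPred_eq, coe_image, Set.mem_image, mem_coe, mem_Icc]
    constructor
    · intro hf
      have := hf.le_add_firstZerosOpeners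
      have := firstZerosOpeners_le f
      have := hf.firstZerosOpeners_le_right
      exact ⟨_, ⟨by omega, by omega⟩, (hf.eq_restrictNat_fourRunsPartner hb).symm⟩
    · rintro ⟨u, hu, rfl⟩
      exact isNCInvolutionOn_fourRunsPartner hb (by omega) (by omega) (by omega)
  rw [phi_eq_ncard_isNCInvolutionOn, hset, Set.ncard_coe_finset, card_image_of_injOn
    ((restrictNat_fourRunsPartner_injOn hb).mono fun u hu => by
      simp only [coe_Icc, Set.mem_Icc] at hu
      exact ⟨by omega, by omega, by omega⟩), Nat.card_Icc]
  omega

end fourRuns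

/-- `φ(1^n 0^n) = 1`, and if `n₁ + n₂ = m₁ + m₂` then
`φ(1^{n₁}0^{m₁}1^{n₂}0^{m₂}) = 1 + min{n₁, m₁, n₂, m₂}`. -/
theorem stmt2 :
    (∀ n : ℕ, 1 ≤ n → phi (List.replicate n true ++ List.replicate n false) = 1) ∧
    (∀ n1 m1 n2 m2 : ℕ, 1 ≤ n1 → 1 ≤ m1 → 1 ≤ n2 → 1 ≤ m2 → n1 + n2 = m1 + m2 →
      phi (List.replicate n1 true ++ List.replicate m1 false ++
           List.replicate n2 true ++ List.replicate m2 false) =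
        1 + min (min n1 m1) (min n2 m2)) := by
  refine ⟨fun n _ => ?_, fun n1 m1 n2 m2 _ _ _ _ hb => phi_fourRuns hb⟩
  simpa [fourRuns] using phi_fourRuns (n₁ := n) (m₁ := n) (n₂ := 0) (m₂ := 0) rfl
end

section
/- Let S = s_1 s_2 ⋯ s_{2n} be a bitstring and 1 ≤ k ≤ 2n. Then φ(S) = φ(Rot_k(S)) = φ(Refl(S)) = φ(1−S), where Rot_k(S) := s_k s_{k+1} ⋯ s_{2n} s_1 s_2 ⋯ s_{k−1}, Refl(S) := s_{2n} ⋯ s_2 s_1, and 1−S is the word whose i-th letter is 1 − s_i. -/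
/-!
Transport pairings along a bijection `σ` of positions. Being a pairing is preserved by any
bijection, and pairing unequal letters is preserved when `σ` respects equality of letters. Two
blocks cross exactly when their endpoints alternate around the circle, so crossings only see the
cyclic order of the positions and are preserved as soon as `σ` preserves or reverses it. Rotation
and reflection are such bijections that also keep the letters; complementation keeps the positions
and exchanges the letters.
-/

def IsDihedral {α β : Type*} [SBtw α] [SBtw β] (σ : α → β) : Prop :=
  (∀ a b c, sbtw (σ a) (σ b) (σ c) ↔ sbtw a b c) ∨ ∀ a b c, sbtw (σ a) (σ b) (σ c) ↔ sbtw c b a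

section
variable {N M : ℕ}

lemma hasCrossing_iff_sbtw (π : Finset (Finset (Fin N))) :
    HasCrossing π ↔
      ∃ B ∈ π, ∃ C ∈ π, ∃ a ∈ B, ∃ c ∈ B, ∃ b ∈ C, ∃ d ∈ C, sbtw a b c ∧ sbtw c d a := by
  simp only [Fin.sbtw_iff]
  constructor
  · rintro ⟨B, hB, C, hC, i₁, i₂, j₁, j₂, hi₁, hi₂, hj₁, hj₂, h₁, h₂, h₃⟩
    exact ⟨B, hB, C, hC, i₁, hi₁, i₂, hi₂, j₁, hj₁, j₂, hj₂, by omega, by omega⟩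
  · rintro ⟨B, hB, C, hC, a, ha, c, hc, b, hb, d, hd, habc, hcda⟩
    -- the crossing is read off starting from the smallest of the four points
    rcases habc with _ | _ | _ <;> rcases hcda with _ | _ | _ <;>
    first
    | exact ⟨B, hB, C, hC, a, c, b, d, ha, hc, hb, hd, by omega, by omega, by omega⟩
    | exact ⟨C, hC, B, hB, b, d, c, a, hb, hd, hc, ha, by omega, by omega, by omega⟩
    | exact ⟨B, hB, C, hC, c, a, d, b, hc, ha, hd, hb, by omega, by omega, by omega⟩
    | exact ⟨C, hC, B, hB, d, b, a, c, hd, hb, ha, hc, by omega, by omega, by omega⟩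

lemma sbtw_cast_iff (h : N = M) {a b c : Fin N} :
    sbtw (a.cast h) (b.cast h) (c.cast h) ↔ sbtw a b c := by
  simp only [Fin.sbtw_iff, Fin.lt_def, Fin.val_cast]

lemma sbtw_add_right_iff [NeZero N] (s : Fin N) {a b c : Fin N} :
    sbtw (a + s) (b + s) (c + s) ↔ sbtw a b c := by
  simp only [Fin.sbtw_iff, Fin.lt_def, Fin.val_add_eq_ite]
  split_ifs <;> omega

lemma sbtw_rev_iff {a b c : Fin N} : sbtw a.rev b.rev c.rev ↔ sbtw c b a := by
  simp only [Fin.sbtw_iff, Fin.rev_lt_rev]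
  tauto

variable (σ : Fin N ≃ Fin M) (π : Finset (Finset (Fin N)))

lemma isPairing_finsetCongr_iff : IsPairing (σ.finsetCongr.finsetCongr π) ↔ IsPairing π := by
  simp only [IsPairing, Equiv.finsetCongr_apply, Finset.mem_map_equiv]
  refine and_congr (σ.finsetCongr.symm.forall_congr fun B => ?_)
    (σ.symm.forall_congr fun i => σ.finsetCongr.symm.existsUnique_congr fun B => ?_) <;> simp

lemma hasCrossing_finsetCongr_iff (hσ : IsDihedral σ) :
    HasCrossing (σ.finsetCongr.finsetCongr π) ↔ HasCrossing π := by
  simp only [hasCrossing_iff_sbtw, Equiv.finsetCongr_apply, Finset.mem_map, Equiv.coe_toEmbedding,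
    exists_exists_and_eq_and]
  rcases hσ with hσ | hσ
  · simp only [hσ]
  · simp only [hσ]
    -- reversing the orientation swaps the two endpoints of the first chord
    constructor <;> rintro ⟨B, hB, C, hC, a, ha, c, hc, h⟩ <;>
      exact ⟨B, hB, C, hC, c, hc, a, ha, h⟩
end

lemma isNCPairingOn_finsetCongr_iff {w w' : List Bool} (σ : Fin w.length ≃ Fin w'.length)
    (hletter : ∀ i j, w'.get (σ i) = w'.get (σ j) ↔ w.get i = w.get j)
    (hσ : IsDihedral σ)
    (π : Finset (Finset (Fin w.length))) :
    IsNCPairingOn w' (σ.finsetCongr.finsetCongr π) ↔ IsNCPairingOn w π := by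
  refine and_congr (isPairing_finsetCongr_iff σ π)
    (and_congr (not_congr (hasCrossing_finsetCongr_iff σ π hσ)) ?_)
  simp only [Equiv.finsetCongr_apply, Finset.mem_map, Equiv.coe_toEmbedding, forall_exists_index,
    and_imp, forall_apply_eq_imp_iff₂, ne_eq, σ.apply_eq_iff_eq, hletter]

lemma phi_eq_of_equiv {w w' : List Bool} (σ : Fin w.length ≃ Fin w'.length)
    (hletter : ∀ i j, w'.get (σ i) = w'.get (σ j) ↔ w.get i = w.get j)
    (hσ : IsDihedral σ) :
    phi w = phi w' := by
  calc phi w = Set.ncard (σ.finsetCongr.finsetCongr ⁻¹' {π' | IsNCPairingOn w' π'}) := by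
        simp only [Set.preimage_ofPred_eq, isNCPairingOn_finsetCongr_iff σ hletter hσ, phi]
    _ = phi w' := Set.ncard_preimage_of_injective_subset_range (Equiv.injective _) (by simp)

lemma phi_rotate (w : List Bool) (s : ℕ) : phi (w.rotate s) = phi w := by
  rcases eq_or_ne w [] with rfl | hw
  · simp
  have : NeZero w.length := ⟨by simpa using hw⟩
  let σ : Fin (w.rotate s).length ≃ Fin w.length :=
    (finCongr (w.length_rotate s)).trans (Equiv.addRight (Fin.ofNat w.length s))
  have hget : ∀ i, w.get (σ i) = (w.rotate s).get i := by
    intro i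
    simp [σ, List.getElem_rotate, Fin.val_add]
  refine phi_eq_of_equiv σ (fun i j => by rw [hget, hget]) (Or.inl fun a b c => ?_)
  simp only [σ, Equiv.trans_apply, finCongr_apply, Equiv.coe_addRight, sbtw_add_right_iff,
    sbtw_cast_iff]

lemma phi_reverse (w : List Bool) : phi w.reverse = phi w := by
  let σ : Fin w.reverse.length ≃ Fin w.length := Fin.revPerm.trans (finCongr w.length_reverse)
  have hget : ∀ i, w.get (σ i) = w.reverse.get i := by
    intro i
    simp only [σ, List.get_eq_getElem, List.getElem_reverse, Equiv.trans_apply, Fin.revPerm_apply,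
      finCongr_apply, Fin.val_cast, Fin.val_rev, List.length_reverse]
    congr 1
    omega
  refine phi_eq_of_equiv σ (fun i j => by rw [hget, hget]) (Or.inr fun a b c => ?_)
  simp only [σ, Equiv.trans_apply, finCongr_apply, Fin.revPerm_apply, sbtw_cast_iff, sbtw_rev_iff]

lemma phi_map_not (w : List Bool) : phi (w.map not) = phi w := by
  let σ : Fin (w.map not).length ≃ Fin w.length := finCongr (w.length_map not)
  have hget : ∀ i, w.get (σ i) = !(w.map not).get i := by
    intro i
    simp [σ]
  refine phi_eq_of_equiv σ (fun i j => by rw [hget, hget, Bool.not_inj_iff])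
    (Or.inl fun a b c => ?_)
  simp only [σ, finCongr_apply, sbtw_cast_iff]

theorem stmt4_general (n : ℕ) (w : List Bool) (hw : w.length = 2 * n)
    (k : ℕ) (hk2 : k ≤ 2 * n) :
    phi w = phi (w.drop (k - 1) ++ w.take (k - 1)) ∧
    phi w = phi w.reverse ∧
    phi w = phi (w.map fun b => !b) := by
  rw [← List.rotate_eq_drop_append_take (by omega), phi_rotate, phi_reverse]
  exact ⟨rfl, rfl, (phi_map_not w).symm⟩

/-- `φ(S) = φ(Rot_k(S)) = φ(Refl(S)) = φ(1 − S)`. -/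
theorem stmt4 (n : ℕ) (w : List Bool) (hw : w.length = 2 * n)
    (k : ℕ) (hk1 : 1 ≤ k) (hk2 : k ≤ 2 * n) :
    phi w = phi (w.drop (k - 1) ++ w.take (k - 1)) ∧
    phi w = phi w.reverse ∧
    phi w = phi (w.map fun b => !b) :=
  stmt4_general n w hw k hk2
end

section
/- Let S = s_1 ⋯ s_{2n} be a bitstring, let π be a non-crossing S-pairing, and let {i,j} ∈ π. Then h_i = h_j, where h_i denotes the height of position i in S. -/
/- If `{i, j} ∈ π` with `i < j`, non-crossing forces the partner of every position
strictly between `i` and `j` to lie there as well, and partners carry opposite letters. So the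
letters strictly between `i` and `j` are balanced and the lattice path returns to the value it had
just after `i` immediately before `j`; since `s_i ≠ s_j`, the two heights coincide. -/

def pathStep (b : Bool) : ℤ := if b then 1 else -1

lemma pathStep_add_pathStep_of_ne {a b : Bool} (h : a ≠ b) : pathStep a + pathStep b = 0 := by
  cases a <;> cases b <;> simp_all [pathStep]

lemma Yval_succ (w : List Bool) (k : Fin w.length) :
    Yval w (k + 1) = Yval w k + pathStep (w.get k) := by
  rw [Yval, Yval, List.take_add_one, List.getElem?_eq_getElem k.isLt]
  cases h : w.get k <;> simp_all [pathStep] <;> ring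

lemma Yval_sub_Yval_eq_sum_Ioo (w : List Bool) {i j : Fin w.length} (hij : i < j) :
    Yval w j - Yval w (i + 1) = ∑ k ∈ Finset.Ioo i j, pathStep (w.get k) := by
  rw [← Finset.sum_Ico_sub (f := Yval w) (m := i + 1) (n := j) hij, Finset.Ico_add_one_left_eq_Ioo,
    ← Fin.map_valEmbedding_Ioo, Finset.sum_map]
  exact Finset.sum_congr rfl fun k _ => by simp [Yval_succ]

lemma heightAt_eq_of_Yval_eq (w : List Bool) (mY : ℤ) {i j : Fin w.length}
    (hw : w.get i ≠ w.get j) (hY : Yval w j = Yval w (i + 1)) :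
    heightAt w mY i = heightAt w mY j := by
  rw [heightAt, heightAt, Yval_succ w j, hY]
  cases hi : w.get i <;> cases hj : w.get j <;> simp_all [pathStep] <;> ring

namespace IsPairing

variable {N : ℕ} {π : Finset (Finset (Fin N))}

lemma eq_of_mem_of_mem (hπ : IsPairing π) {B C : Finset (Fin N)} (hB : B ∈ π) (hC : C ∈ π)
    {k : Fin N} (hkB : k ∈ B) (hkC : k ∈ C) : B = C :=
  (hπ.2 k).unique ⟨hB, hkB⟩ ⟨hC, hkC⟩

lemma exists_ne_pair_mem (hπ : IsPairing π) (k : Fin N) : ∃ p, p ≠ k ∧ {k, p} ∈ π := by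
  obtain ⟨B, ⟨hB, hkB⟩, -⟩ := hπ.2 k
  obtain ⟨p, hpk, rfl⟩ : ∃ p, p ≠ k ∧ B = {k, p} := by
    obtain ⟨a, b, hab, rfl⟩ := Finset.card_eq_two.mp (hπ.1 B hB)
    rw [Finset.mem_insert, Finset.mem_singleton] at hkB
    rcases hkB with rfl | rfl
    · exact ⟨b, hab.symm, rfl⟩
    · exact ⟨a, hab, Finset.pair_comm _ _⟩
  exact ⟨p, hpk, hB⟩

noncomputable def partner (hπ : IsPairing π) (k : Fin N) : Fin N :=
  (hπ.exists_ne_pair_mem k).choose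

lemma partner_ne (hπ : IsPairing π) (k : Fin N) : hπ.partner k ≠ k :=
  (hπ.exists_ne_pair_mem k).choose_spec.1

lemma pair_partner_mem (hπ : IsPairing π) (k : Fin N) : {k, hπ.partner k} ∈ π :=
  (hπ.exists_ne_pair_mem k).choose_spec.2

lemma partner_eq_of_mem (hπ : IsPairing π) {B : Finset (Fin N)} (hB : B ∈ π) {i j : Fin N}
    (hi : i ∈ B) (hj : j ∈ B) (hij : i ≠ j) : hπ.partner i = j := by
  have hBi : B = {i, hπ.partner i} :=
    hπ.eq_of_mem_of_mem hB (hπ.pair_partner_mem i) hi (Finset.mem_insert_self _ _)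
  rw [hBi, Finset.mem_insert, Finset.mem_singleton] at hj
  exact (hj.resolve_left hij.symm).symm

lemma partner_partner (hπ : IsPairing π) (k : Fin N) : hπ.partner (hπ.partner k) = k :=
  hπ.partner_eq_of_mem (hπ.pair_partner_mem k) (by simp) (by simp) (hπ.partner_ne k)

lemma partner_mem_Ioo (hπ : IsPairing π) (hnc : ¬ HasCrossing π) {B : Finset (Fin N)}
    (hB : B ∈ π) {i j : Fin N} (hi : i ∈ B) (hj : j ∈ B) {k : Fin N} (hk : k ∈ Finset.Ioo i j) :
    hπ.partner k ∈ Finset.Ioo i j := by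
  obtain ⟨hik, hkj⟩ := Finset.mem_Ioo.mp hk
  have hij := hπ.partner_eq_of_mem hB hi hj (hik.trans hkj).ne
  have hji := hπ.partner_eq_of_mem hB hj hi (hik.trans hkj).ne'
  have hpi : hπ.partner k ≠ i := fun h => hkj.ne (by rw [← hij, ← h, partner_partner])
  have hpj : hπ.partner k ≠ j := fun h => hik.ne' (by rw [← hji, ← h, partner_partner])
  have hC := hπ.pair_partner_mem k
  refine Finset.mem_Ioo.mpr ⟨(lt_or_gt_of_ne hpi).resolve_left fun hpi' => ?_,
    (lt_or_gt_of_ne hpj).resolve_right fun hjp => ?_⟩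
  · exact hnc ⟨_, hC, B, hB, _, _, _, _, by simp, by simp, hi, hj, hpi', hik, hkj⟩
  · exact hnc ⟨B, hB, _, hC, _, _, _, _, hi, hj, by simp, by simp, hik, hkj, hjp⟩

end IsPairing

lemma IsNCPairingOn.sum_pathStep_Ioo_eq_zero {w : List Bool} {π : Finset (Finset (Fin w.length))}
    (hπ : IsNCPairingOn w π) {B : Finset (Fin w.length)} (hB : B ∈ π) {i j : Fin w.length}
    (hi : i ∈ B) (hj : j ∈ B) : ∑ k ∈ Finset.Ioo i j, pathStep (w.get k) = 0 := by
  obtain ⟨hpair, hnc, hletters⟩ := hπ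
  have hflip (k : Fin w.length) : w.get k ≠ w.get (hpair.partner k) :=
    hletters _ (hpair.pair_partner_mem k) _ (by simp) _ (by simp) (hpair.partner_ne k).symm
  exact Finset.sum_involution (fun k _ => hpair.partner k)
    (fun k _ => pathStep_add_pathStep_of_ne (hflip k)) (fun k _ _ => hpair.partner_ne k)
    (fun _ hk => hpair.partner_mem_Ioo hnc hB hi hj hk) (fun k _ => hpair.partner_partner k)

theorem stmt5_general (w : List Bool) (mY : ℤ)
    (π : Finset (Finset (Fin w.length))) (hπ : IsNCPairingOn w π)
    (B : Finset (Fin w.length)) (hB : B ∈ π)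
    (i j : Fin w.length) (hi : i ∈ B) (hj : j ∈ B) :
    heightAt w mY i = heightAt w mY j := by
  wlog hij : i < j generalizing i j
  · rcases (not_lt.mp hij).lt_or_eq with h | rfl
    · exact (this j i hj hi h).symm
    · rfl
  refine heightAt_eq_of_Yval_eq w mY (hπ.2.2 B hB i hi j hj hij.ne) ?_
  rw [← sub_eq_zero, Yval_sub_Yval_eq_sum_Ioo w hij]
  exact hπ.sum_pathStep_Ioo_eq_zero hB hi hj

/-- If `π` is a non-crossing `w`-pairing and `{i,j} ∈ π`, then
the heights of positions `i` and `j` agree (`mY` is the minimum of the `Y_i`). -/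
theorem stmt5 (w : List Bool) (mY : ℤ)
    (hm : IsLeast {y : ℤ | ∃ i : Fin w.length, Yval w (i.val + 1) = y} mY)
    (π : Finset (Finset (Fin w.length))) (hπ : IsNCPairingOn w π)
    (B : Finset (Fin w.length)) (hB : B ∈ π)
    (i j : Fin w.length) (hi : i ∈ B) (hj : j ∈ B) :
    heightAt w mY i = heightAt w mY j :=
  stmt5_general w mY π hπ B hB i j hi hj
end

section
/- Let r ≥ 1 and let n_1,…,n_r be positive integers. Then the number of r-tuples (m_1,…,m_r) of nonnegative integers satisfying m_1+⋯+m_j ≤ n_1+⋯+n_j for all 1 ≤ j ≤ r−1 and m_1+⋯+m_r = n_1+⋯+n_r equals Σ_{(d_1,…,d_r) ∈ D_r} Π_{i=1}^r C(n_i + 1, d_i). -/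
/-!
Start the Catalan word at height `e` (`InCFFrom e`) and the degree sequences at height `g`
(`IsCatalanSeqFrom g`: `g + d₁ + ⋯ + dᵢ ≥ i`). For `r ≥ 1` the two counts are related by
`cfCount e n = ∑_g C(e, g) * catWeight g n`, which at `e = 0` is the theorem.

Induct on `r`, peeling off the first block. A first block `1^b 0^a` takes the height `e` to
`e + b - a` for any `a ≤ e + b`, while a first degree `a` has weight `C(b + 1, a)` and takes the
height `g` to `g + a - 1`. Both recursions then put the coefficient `C(e + b + 1, g' + 1)` in front
of the count from height `g'`: on the word side by the hockey-stick identity, on the degree side by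
Vandermonde's identity `∑_{g + a = g' + 1} C(e, g) C(b + 1, a) = C(e + b + 1, g' + 1)`.
-/

open Finset

section

variable {r k : ℕ}

@[simp]
lemma prefSum_zero (f : Fin r → ℕ) : prefSum f 0 = 0 := by
  simp [prefSum]

lemma prefSum_cons_succ (a : ℕ) (f : Fin k → ℕ) (j : ℕ) :
    prefSum (Fin.cons a f : Fin (k + 1) → ℕ) (j + 1) = a + prefSum f j := by
  simp [prefSum, Finset.sum_filter, Fin.sum_univ_succ]

def InCFFrom (e : ℕ) (n m : Fin r → ℕ) : Prop :=
  (∀ j, 1 ≤ j → j ≤ r - 1 → prefSum m j ≤ e + prefSum n j) ∧ ∑ i, m i = e + ∑ i, n i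

lemma inCF_iff_inCFFrom_zero {n m : Fin r → ℕ} : InCF n m ↔ InCFFrom 0 n m := by
  simp [InCF, InCFFrom]

lemma inCFFrom_cons_iff {e a b : ℕ} {n m : Fin k → ℕ} :
    InCFFrom e (Fin.cons b n) (Fin.cons a m) ↔ a ≤ e + b ∧ InCFFrom (e + b - a) n m := by
  simp only [InCFFrom, Fin.sum_cons, Nat.add_sub_cancel]
  constructor
  · rintro ⟨hpre, hsum⟩
    have hab : a ≤ e + b := by
      rcases Nat.eq_zero_or_pos k with rfl | hk
      · simp only [univ_eq_empty, sum_empty, add_zero] at hsum; omega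
      · simpa [prefSum_cons_succ] using hpre 1 le_rfl hk
    refine ⟨hab, fun j hj hjk => ?_, by omega⟩
    have := hpre (j + 1) (by omega) (by omega)
    rw [prefSum_cons_succ, prefSum_cons_succ] at this
    omega
  · rintro ⟨hab, hpre, hsum⟩
    refine ⟨fun j hj hjk => ?_, by omega⟩
    obtain ⟨j, rfl⟩ : ∃ i, j = i + 1 := ⟨j - 1, by omega⟩
    rw [prefSum_cons_succ, prefSum_cons_succ]
    rcases Nat.eq_zero_or_pos j with rfl | hj
    · simpa using hab
    · have := hpre j hj (by omega)
      omega

lemma finite_setOf_inCFFrom (e : ℕ) (n : Fin r → ℕ) : {m | InCFFrom e n m}.Finite :=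
  (Nat.antidiagonalTuple r (e + ∑ i, n i)).finite_toSet.subset
    fun _ hm => Nat.mem_antidiagonalTuple.2 hm.2

def IsCatalanSeqFrom (f : ℕ) (d : Fin r → ℕ) : Prop :=
  (∀ i, 1 ≤ i → i ≤ r - 1 → i ≤ f + prefSum d i) ∧ f + ∑ j, d j = r - 1

lemma isCatalanSeq_iff_isCatalanSeqFrom_zero {d : Fin r → ℕ} :
    IsCatalanSeq r d ↔ IsCatalanSeqFrom 0 d := by
  simp [IsCatalanSeq, IsCatalanSeqFrom, prefSum]

lemma isCatalanSeqFrom_cons_iff {f a : ℕ} {d : Fin (k + 1) → ℕ} :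
    IsCatalanSeqFrom f (Fin.cons a d) ↔ 1 ≤ f + a ∧ IsCatalanSeqFrom (f + a - 1) d := by
  simp only [IsCatalanSeqFrom, Fin.sum_cons, Nat.add_sub_cancel]
  constructor
  · rintro ⟨hpre, hsum⟩
    have hfa : 1 ≤ f + a := by simpa [prefSum_cons_succ] using hpre 1 le_rfl (by omega)
    refine ⟨hfa, fun i hi hik => ?_, by omega⟩
    have := hpre (i + 1) (by omega) (by omega)
    rw [prefSum_cons_succ] at this
    omega
  · rintro ⟨hfa, hpre, hsum⟩
    refine ⟨fun i hi hik => ?_, by omega⟩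
    obtain ⟨i, rfl⟩ : ∃ j, i = j + 1 := ⟨i - 1, by omega⟩
    rw [prefSum_cons_succ]
    rcases Nat.eq_zero_or_pos i with rfl | hi
    · simpa using hfa
    · have := hpre i hi (by omega)
      omega

lemma finite_setOf_isCatalanSeqFrom (f : ℕ) : {d : Fin r → ℕ | IsCatalanSeqFrom f d}.Finite :=
  (Nat.antidiagonalTuple r (r - 1 - f)).finite_toSet.subset
    fun _ hd => Nat.mem_antidiagonalTuple.2 (by have := hd.2; omega)

theorem finsum_mem_eq_sum_cons {α M : Type*} [AddCommMonoid M] {S : Set (Fin (k + 1) → α)}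
    (A : Finset α) (T : α → Set (Fin k → α)) (hT : ∀ a ∈ A, (T a).Finite)
    (hS : ∀ a x, Fin.cons a x ∈ S ↔ a ∈ A ∧ x ∈ T a) (g : (Fin (k + 1) → α) → M) :
    ∑ᶠ x ∈ S, g x = ∑ a ∈ A, ∑ᶠ y ∈ T a, g (Fin.cons a y) := by
  have hS' : S = ⋃ a ∈ (A : Set α), Fin.cons a '' T a := by
    ext x
    obtain ⟨a, y, rfl⟩ : ∃ a y, x = Fin.cons a y := ⟨x 0, Fin.tail x, (Fin.cons_self_tail x).symm⟩
    simp [hS, Fin.cons_inj, and_comm]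
  rw [hS', finsum_mem_biUnion _ A.finite_toSet fun a ha => (hT a ha).image _,
    finsum_mem_coe_finset]
  · exact sum_congr rfl fun a _ =>
      finsum_mem_image (Fin.cons_right_injective (α := fun _ => α) a).injOn
  · intro a _ a' _ hne
    refine Set.disjoint_left.2 ?_
    rintro _ ⟨y, -, rfl⟩ ⟨y', -, hy⟩
    exact hne (Fin.cons_inj.1 hy).1.symm

noncomputable def cfCount (e : ℕ) (n : Fin r → ℕ) : ℕ := {m | InCFFrom e n m}.ncard

noncomputable def catWeight (f : ℕ) (n : Fin r → ℕ) : ℕ :=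
  ∑ᶠ d ∈ {d | IsCatalanSeqFrom f d}, ∏ i, (n i + 1).choose (d i)

lemma cfCount_cons (e b : ℕ) (n : Fin k → ℕ) :
    cfCount e (Fin.cons b n : Fin (k + 1) → ℕ) =
      ∑ a ∈ range (e + b + 1), cfCount (e + b - a) n := by
  rw [cfCount, ← finsum_one, finsum_mem_eq_sum_cons (range (e + b + 1))
    (fun a => {m | InCFFrom (e + b - a) n m}) (fun a _ => finite_setOf_inCFFrom _ n)]
  · exact sum_congr rfl fun a _ => finsum_one
  · simp [inCFFrom_cons_iff]

lemma cfCount_fin_one (e : ℕ) (n : Fin 1 → ℕ) : cfCount e n = 1 := by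
  have : {m : Fin 1 → ℕ | InCFFrom e n m} = {fun _ => e + n 0} := by
    ext m
    simp +contextual [InCFFrom, funext_iff, Fin.forall_fin_one]
  simp [cfCount, this]

lemma catWeight_cons (f b : ℕ) (n : Fin (k + 1) → ℕ) :
    catWeight f (Fin.cons b n : Fin (k + 2) → ℕ) =
      ∑ a ∈ range (k + 2) with 1 ≤ f + a, (b + 1).choose a * catWeight (f + a - 1) n := by
  rw [catWeight, finsum_mem_eq_sum_cons _ (fun a => {d | IsCatalanSeqFrom (f + a - 1) d})
    (fun a _ => finite_setOf_isCatalanSeqFrom _)]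
  · refine sum_congr rfl fun a _ => ?_
    rw [catWeight, mul_finsum_mem]
    refine finsum_mem_congr rfl fun d _ => ?_
    simp [Fin.prod_univ_succ]
  · intro a d
    simp only [Set.mem_ofPred_eq, isCatalanSeqFrom_cons_iff, mem_filter, mem_range]
    exact ⟨fun ⟨hfa, hd⟩ => ⟨⟨by have := hd.2; omega, hfa⟩, hd⟩, fun ⟨⟨_, hfa⟩, hd⟩ => ⟨hfa, hd⟩⟩

lemma catWeight_zero_fin_one (n : Fin 1 → ℕ) : catWeight 0 n = 1 := by
  have : {d : Fin 1 → ℕ | IsCatalanSeqFrom 0 d} = {0} := by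
    ext d
    simp +contextual [IsCatalanSeqFrom, funext_iff, Fin.forall_fin_one]
  simp [catWeight, this]

lemma catWeight_eq_zero_of_lt {f : ℕ} (n : Fin r → ℕ) (hf : r - 1 < f) : catWeight f n = 0 := by
  have : {d : Fin r → ℕ | IsCatalanSeqFrom f d} = ∅ := by
    ext d
    simp only [Set.mem_ofPred_eq, Set.mem_empty_iff_false, iff_false]
    exact fun hd => by have := hd.2; omega
  simp [catWeight, this]

lemma sum_range_choose_sub (N g : ℕ) :
    ∑ a ∈ range (N + 1), (N - a).choose g = (N + 1).choose (g + 1) := by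
  have hreflect : ∑ a ∈ range (N + 1), (N - a).choose g = ∑ i ∈ range (N + 1), i.choose g := by
    rw [← sum_range_reflect]
    exact sum_congr rfl fun j hj => by rw [mem_range] at hj; congr 1; omega
  rw [hreflect, ← Nat.sum_Icc_choose]
  refine (sum_subset (fun i hi => ?_) fun i _ hi => ?_).symm <;> simp only [mem_Icc, mem_range] at *
  · omega
  · exact Nat.choose_eq_zero_of_lt (by omega)

lemma sum_choose_mul_sum_choose_mul (e b t : ℕ) (W : ℕ → ℕ) (hW : ∀ g, t < g → W g = 0) :
    ∑ f ∈ range (t + 2), e.choose f *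
        ∑ a ∈ range (t + 2) with 1 ≤ f + a, (b + 1).choose a * W (f + a - 1) =
      ∑ g ∈ range (t + 1), (e + b + 1).choose (g + 1) * W g := by
  set F : ℕ × ℕ → ℕ := fun p => e.choose p.1 * (b + 1).choose p.2 * W (p.1 + p.2 - 1)
  -- Both sides sum `F` over the pairs `(f, a)` with `1 ≤ f + a ≤ t + 1`, grouped differently.
  calc _ = ∑ p ∈ range (t + 2) ×ˢ range (t + 2) with 1 ≤ p.1 + p.2, F p := by
        rw [sum_filter, sum_product]
        simp_rw [sum_filter, mul_sum, mul_ite, mul_zero]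
        simp only [F, mul_assoc]
    _ = ∑ x ∈ (range (t + 1)).sigma fun g => antidiagonal (g + 1), F x.2 := by
        refine sum_bij_ne_zero (fun p _ _ => ⟨p.1 + p.2 - 1, p⟩) ?_ ?_ ?_ ?_
        · intro p hp hF
          simp only [mem_filter, mem_product, mem_range] at hp
          have : p.1 + p.2 - 1 ≤ t := by
            by_contra! h
            exact hF (by simp [F, hW _ h])
          simp only [mem_sigma, mem_range, HasAntidiagonal.mem_antidiagonal]
          omega
        · intro p _ _ q _ _ h
          exact (Sigma.mk.inj_iff.1 h).2.eq
        · rintro ⟨g, p⟩ hx hF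
          simp only [mem_sigma, mem_range, HasAntidiagonal.mem_antidiagonal] at hx
          refine ⟨p, ?_, hF, ?_⟩
          · simp only [mem_filter, mem_product, mem_range]
            omega
          · simp only [hx.2, Nat.add_sub_cancel]
        · intro p _ _
          rfl
    _ = _ := by
        rw [sum_sigma, add_assoc]
        refine sum_congr rfl fun g _ => ?_
        rw [Nat.add_choose_eq, sum_mul]
        refine sum_congr rfl fun p hp => ?_
        rw [HasAntidiagonal.mem_antidiagonal] at hp
        simp only [F, hp, Nat.add_sub_cancel]

theorem cfCount_eq_sum_choose_mul_catWeight (t : ℕ) (n : Fin (t + 1) → ℕ) (e : ℕ) :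
    cfCount e n = ∑ g ∈ range (t + 1), e.choose g * catWeight g n := by
  induction t generalizing e with
  | zero => simp [cfCount_fin_one, catWeight_zero_fin_one]
  | succ t ih =>
    rw [← Fin.cons_self_tail n]
    set b := n 0
    set n' := Fin.tail n
    calc cfCount e (Fin.cons b n' : Fin (t + 2) → ℕ)
        = ∑ a ∈ range (e + b + 1), ∑ g ∈ range (t + 1), (e + b - a).choose g * catWeight g n' := by
          simp_rw [cfCount_cons, ih]
      _ = ∑ g ∈ range (t + 1), (e + b + 1).choose (g + 1) * catWeight g n' := by
          rw [sum_comm]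
          simp_rw [← sum_mul, sum_range_choose_sub]
      _ = _ := by
          rw [← sum_choose_mul_sum_choose_mul e b t _ fun g hg =>
            catWeight_eq_zero_of_lt n' (by omega)]
          simp_rw [catWeight_cons]

theorem cfCount_zero_eq_catWeight_zero (t : ℕ) (n : Fin (t + 1) → ℕ) :
    cfCount 0 n = catWeight 0 n := by
  simp [cfCount_eq_sum_choose_mul_catWeight, sum_range_succ']

end

theorem stmt17_general (r : ℕ) (hr : 1 ≤ r) (n : Fin r → ℕ) :
    Nat.card {m : Fin r → ℕ | InCF n m} =
      ∑ᶠ d ∈ {d : Fin r → ℕ | IsCatalanSeq r d}, ∏ i, (n i + 1).choose (d i) := by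
  obtain ⟨t, rfl⟩ : ∃ t, r = t + 1 := ⟨r - 1, by omega⟩
  simp_rw [Nat.card_coe_set_eq, inCF_iff_inCFFrom_zero, isCatalanSeq_iff_isCatalanSeqFrom_zero]
  exact cfCount_zero_eq_catWeight_zero t n

/-- `|CF(n)| = Σ_{d ∈ D_r} Π_i C(n_i + 1, d_i)`. -/
theorem stmt17 (r : ℕ) (hr : 1 ≤ r) (n : Fin r → ℕ) (hn : ∀ i, 1 ≤ n i) :
    Nat.card {m : Fin r → ℕ | InCF n m} =
      ∑ᶠ d ∈ {d : Fin r → ℕ | IsCatalanSeq r d}, ∏ i, (n i + 1).choose (d i) :=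
  stmt17_general r hr n
end

section
/- Let r ≥ 1 and let n = (n_1,…,n_r) and n' = (n'_1,…,n'_r) be r-tuples of positive integers such that n'_1+⋯+n'_j ≥ n_1+⋯+n_j for all 1 ≤ j ≤ r (i.e., n' dominates n). Then |CF(n)| ≤ |CF(n')|. -/
/-!
Adding the surplus `∑ n' - ∑ n` to the last entry is an injection `CF(n) → CF(n')`: the proper
prefix sums of `m` are unchanged, and their bounds only get weaker since `n'` dominates `n`,
while the total becomes `∑ n'`. For `r = 0` both sets consist of the empty tuple.
-/

section
variable {r : ℕ}

lemma prefSum_of_le (f : Fin r → ℕ) {j : ℕ} (hj : r ≤ j) : prefSum f j = ∑ i, f i := by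
  rw [prefSum, Finset.filter_true_of_mem fun i _ => i.isLt.trans_le hj]

lemma prefSum_add (f g : Fin r → ℕ) (j : ℕ) : prefSum (f + g) j = prefSum f j + prefSum g j :=
  Finset.sum_add_distrib

lemma prefSum_single_last (d : ℕ) {j : ℕ} (hj : j ≤ r) :
    prefSum (Pi.single (Fin.last r) d) j = 0 :=
  Finset.sum_eq_zero fun i hi => by
    rw [Finset.mem_filter] at hi
    exact Pi.single_eq_of_ne (M := fun _ => ℕ)
      (Fin.ne_of_lt (Fin.lt_def.mpr (by rw [Fin.val_last]; omega))) d

lemma finite_setOf_inCF (n : Fin r → ℕ) : {m : Fin r → ℕ | InCF n m}.Finite :=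
  (Set.finite_Iic fun _ => ∑ i, n i).subset fun m hm i =>
    hm.2 ▸ Finset.single_le_sum (fun j _ => Nat.zero_le (m j)) (Finset.mem_univ i)

lemma inCF_add_single_last {n n' m : Fin (r + 1) → ℕ}
    (hdom : ∀ j : ℕ, 1 ≤ j → j ≤ r + 1 → prefSum n j ≤ prefSum n' j) (hm : InCF n m) :
    InCF n' (m + Pi.single (Fin.last r) (∑ i, n' i - ∑ i, n i)) := by
  have htotal : ∑ i, n i ≤ ∑ i, n' i := by
    simpa only [prefSum_of_le _ le_rfl] using hdom (r + 1) (Nat.le_add_left 1 r) le_rfl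
  refine ⟨fun j hj hjr => ?_, ?_⟩
  · rw [Nat.add_sub_cancel] at hjr
    rw [prefSum_add, prefSum_single_last _ hjr, add_zero]
    exact (hm.1 j hj (by omega)).trans (hdom j hj (by omega))
  · simp only [Pi.add_apply]
    rw [Finset.sum_add_distrib, Finset.sum_pi_single', if_pos (Finset.mem_univ _), hm.2]
    omega

end

theorem stmt18_general (r : ℕ) (n n' : Fin r → ℕ)
    (hdom : ∀ j : ℕ, 1 ≤ j → j ≤ r → prefSum n j ≤ prefSum n' j) :
    Nat.card {m : Fin r → ℕ | InCF n m} ≤ Nat.card {m : Fin r → ℕ | InCF n' m} := by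
  cases r with
  | zero =>
    have hall (n m : Fin 0 → ℕ) : InCF n m := ⟨fun j hj hj0 => by omega, rfl⟩
    simp only [hall, Set.ofPred_true, le_refl]
  | succ r =>
    have := (finite_setOf_inCF n').to_subtype
    exact Nat.card_le_card_of_injective
      (fun m => ⟨m.1 + Pi.single (Fin.last r) (∑ i, n' i - ∑ i, n i),
        inCF_add_single_last hdom m.2⟩)
      fun a b hab => Subtype.ext (add_left_injective _ (congrArg Subtype.val hab))

/-- If `n'` dominates `n`, then `|CF(n)| ≤ |CF(n')|`. -/
theorem stmt18 (r : ℕ) (hr : 1 ≤ r) (n n' : Fin r → ℕ)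
    (hn : ∀ i, 1 ≤ n i) (hn' : ∀ i, 1 ≤ n' i)
    (hdom : ∀ j : ℕ, 1 ≤ j → j ≤ r → prefSum n j ≤ prefSum n' j) :
    Nat.card {m : Fin r → ℕ | InCF n m} ≤ Nat.card {m : Fin r → ℕ | InCF n' m} :=
  stmt18_general r n n' hdom
end
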